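/- arXiv:2001.03682 — 3 statements merged into one kernel-verified Lean document; each statement's English description precedes it below -/
import Mathlib

section
/- Let φ be a 2×2 traceless matrix of holomorphic 1-forms on a disk around 0 such that zφ is holomorphic, and suppose the value of zφ at z=0 is nilpotent but nonzero (so det φ has a simple pole at 0). Then there exists a holomorphic gauge transformation g (holomorphic SL(2,ℂ)-valued on a possibly smaller disk) such that g⁻¹φg = [[0,1],[1/z,0]] dz, assuming the coordinate z is chosen so that -det φ = z⁻¹ dz². -/
/-!
Since `B = z A` is traceless with `det B = -z`, Cayley–Hamilton gives `B² = z`. At `z = 0`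
the matrix `B 0` is a nonzero square-zero matrix, so some constant vector `v` has `B 0 v ≠ 0`,
and then `v, B 0 v` is a basis. Hence the Krylov matrix `P = (v | B v)` is invertible near `0`,
and `B P = P [[0, z], [1, 0]]` because `B (B v) = z v`. Dividing `P` by a holomorphic square
root of `det P` (which exists near `0` since `det P 0 ≠ 0`) gives the gauge transformation.
-/

open Metric Matrix Filter Topology

namespace Matrix

variable {R K : Type*}

theorem mul_self_eq_neg_det_smul_one_of_trace_eq_zero [CommRing R]
    {M : Matrix (Fin 2) (Fin 2) R} (hM : M.trace = 0) : M * M = -M.det • 1 := by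
  rw [trace_fin_two] at hM
  ext i j
  fin_cases i <;> fin_cases j <;>
    simp only [Fin.zero_eta, Fin.mk_one, Fin.isValue, mul_apply, Fin.sum_univ_two, det_fin_two,
      neg_sub, smul_apply, one_apply_eq, one_apply_ne, ne_eq, zero_ne_one, one_ne_zero,
      not_false_eq_true, smul_eq_mul, mul_one, mul_zero]
  · linear_combination M 0 0 * hM
  · linear_combination M 0 1 * hM
  · linear_combination M 1 0 * hM
  · linear_combination M 1 1 * hM

theorem exists_mulVec_ne_zero {m n : Type*} [Fintype n] [DecidableEq n] [Semiring R]
    {M : Matrix m n R} (hM : M ≠ 0) : ∃ v, M *ᵥ v ≠ 0 := by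
  by_contra! h
  exact hM (ext_of_mulVec_single fun i => by rw [h, zero_mulVec])

theorem conj_eq_of_mul_eq {n : Type*} [Fintype n] [DecidableEq n] [CommRing R]
    {M g N : Matrix n n R} (hg : IsUnit g.det) (h : M * g = g * N) : g⁻¹ * M * g = N := by
  rw [mul_assoc, h, ← mul_assoc, nonsing_inv_mul _ hg, one_mul]

theorem det_inv_smul_eq_one [Field K] {P : Matrix (Fin 2) (Fin 2) K} {d : K}
    (hd : d ^ 2 = P.det) (hd0 : d ≠ 0) : (d⁻¹ • P).det = 1 := by
  rw [det_smul, Fintype.card_fin, ← hd, inv_pow, inv_mul_cancel₀ (pow_ne_zero 2 hd0)]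

section Krylov

variable [CommRing R]

def krylov (M : Matrix (Fin 2) (Fin 2) R) (v : Fin 2 → R) : Matrix (Fin 2) (Fin 2) R :=
  (of ![v, M *ᵥ v])ᵀ

theorem krylov_mulVec (M : Matrix (Fin 2) (Fin 2) R) (v u : Fin 2 → R) :
    krylov M v *ᵥ u = u 0 • v + u 1 • M *ᵥ v := by
  ext i
  fin_cases i <;> simp [krylov, mulVec_transpose, vecMul, dotProduct, Fin.sum_univ_two]

theorem mul_krylov {M : Matrix (Fin 2) (Fin 2) R} {c : R} (hM : M * M = c • 1)
    (v : Fin 2 → R) : M * krylov M v = krylov M v * !![0, c; 1, 0] := by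
  have hMMv : M *ᵥ (M *ᵥ v) = c • v := by rw [mulVec_mulVec, hM, smul_mulVec, one_mulVec]
  ext i j
  have hMMv_i := congrFun hMMv i
  fin_cases i <;> fin_cases j <;>
    simp only [krylov, mulVec, dotProduct, Fin.zero_eta, Fin.mk_one, Fin.isValue,
      Fin.sum_univ_two, Pi.smul_apply, smul_eq_mul, mul_apply, transpose_apply, of_apply,
      cons_val', cons_val_fin_one, cons_val_zero, cons_val_one, mul_zero, mul_one, zero_add,
      add_zero] at hMMv_i ⊢ <;>
    linear_combination hMMv_i

end Krylov

theorem det_krylov_ne_zero [Field K] {N : Matrix (Fin 2) (Fin 2) K} (hN : N * N = 0)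
    {v : Fin 2 → K} (hv : N *ᵥ v ≠ 0) : (krylov N v).det ≠ 0 := by
  intro hdet
  obtain ⟨u, hu_ne, hu⟩ := exists_mulVec_eq_zero_iff.mpr hdet
  rw [krylov_mulVec] at hu
  have hNNv : N *ᵥ (N *ᵥ v) = 0 := by rw [mulVec_mulVec, hN, zero_mulVec]
  have hu0 : u 0 = 0 := by
    have hNu := congrArg (N *ᵥ ·) hu
    simp only [mulVec_add, mulVec_smul, hNNv, smul_zero, add_zero, mulVec_zero] at hNu
    exact (smul_eq_zero.mp hNu).resolve_right hv
  have hu1 : u 1 = 0 := by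
    rw [hu0, zero_smul, zero_add] at hu
    exact (smul_eq_zero.mp hu).resolve_right hv
  exact hu_ne (funext fun i => by fin_cases i <;> assumption)

theorem conj_smul_krylov [Field K] {M : Matrix (Fin 2) (Fin 2) K} {z d : K}
    (hM : M * M = z • 1) (hz : z ≠ 0) {v : Fin 2 → K} (hg : (d • krylov M v).det = 1) :
    (d • krylov M v)⁻¹ * (z⁻¹ • M) * (d • krylov M v) = !![0, 1; z⁻¹, 0] := by
  refine conj_eq_of_mul_eq (hg ▸ isUnit_one) ?_
  have hN : !![0, 1; z⁻¹, 0] = z⁻¹ • !![0, z; 1, 0] := by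
    ext i j; fin_cases i <;> fin_cases j <;> simp [hz]
  rw [smul_mul_smul_comm, mul_krylov hM, hN, mul_smul_comm, smul_mul_assoc, smul_smul, mul_comm]

theorem differentiableAt_krylov_apply {𝕜 E : Type*} [NontriviallyNormedField 𝕜]
    [NormedAddCommGroup E] [NormedSpace 𝕜 E] {B : E → Matrix (Fin 2) (Fin 2) 𝕜} {z : E}
    (hB : ∀ i j, DifferentiableAt 𝕜 (fun z => B z i j) z) (v : Fin 2 → 𝕜) (i j : Fin 2) :
    DifferentiableAt 𝕜 (fun z => krylov (B z) v i j) z := by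
  fin_cases j
  · simp [krylov]
  · simp only [krylov, mulVec, dotProduct, Fin.mk_one, transpose_apply, of_apply,
      cons_val_one, cons_val_fin_one]
    exact DifferentiableAt.fun_sum fun k _ => (hB i k).mul_const (v k)

end Matrix

theorem Complex.exists_eventually_sq_eq_of_ne_zero {f : ℂ → ℂ} {x : ℂ}
    (hf : ∀ᶠ z in 𝓝 x, DifferentiableAt ℂ f z) (hfx : f x ≠ 0) :
    ∃ h : ℂ → ℂ, ∀ᶠ z in 𝓝 x, DifferentiableAt ℂ h z ∧ h z ≠ 0 ∧ h z ^ 2 = f z := by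
  have hslit : ∀ᶠ z in 𝓝 x, f z / f x ∈ slitPlane :=
    (hf.self_of_nhds.continuousAt.div_const _).eventually_mem
      (isOpen_slitPlane.mem_nhds (by simp [hfx]))
  refine ⟨fun z => exp ((log (f x) + log (f z / f x)) / 2), ?_⟩
  filter_upwards [hf, hslit] with z hfz hz
  refine ⟨((differentiableAt_const _).add (hfz.div_const _ |>.clog hz)).div_const 2 |>.cexp,
    exp_ne_zero _, ?_⟩
  rw [← exp_nat_mul, Nat.cast_ofNat, mul_div_cancel₀ _ two_ne_zero, exp_add, exp_log hfx,
    exp_log (slitPlane_ne_zero hz), mul_div_cancel₀ _ hfx]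

theorem stmt_0_general (r : ℝ) (hr : 0 < r) (A B : ℂ → Matrix (Fin 2) (Fin 2) ℂ)
    (hAB : ∀ z ∈ ball (0 : ℂ) r, z ≠ 0 → A z = z⁻¹ • B z)
    (hBhol : ∀ i j, DifferentiableOn ℂ (fun z => B z i j) (ball (0 : ℂ) r))
    (htr : ∀ z ∈ ball (0 : ℂ) r, (B z).trace = 0)
    (hdet : ∀ z ∈ ball (0 : ℂ) r, (B z).det = -z)
    (hne : B 0 ≠ 0) :
    ∃ ε : ℝ, 0 < ε ∧ ε ≤ r ∧ ∃ g : ℂ → Matrix (Fin 2) (Fin 2) ℂ,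
      (∀ i j, DifferentiableOn ℂ (fun z => g z i j) (ball (0 : ℂ) ε)) ∧
      (∀ z ∈ ball (0 : ℂ) ε, (g z).det = 1) ∧
      (∀ z ∈ ball (0 : ℂ) ε, z ≠ 0 →
        (g z)⁻¹ * A z * g z = !![0, 1; z⁻¹, 0]) := by
  have hBsq : ∀ z ∈ ball (0 : ℂ) r, B z * B z = z • 1 := fun z hz => by
    rw [mul_self_eq_neg_det_smul_one_of_trace_eq_zero (htr z hz), hdet z hz, neg_neg]
  have hBdiff : ∀ z ∈ ball (0 : ℂ) r, ∀ i j, DifferentiableAt ℂ (fun z => B z i j) z :=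
    fun z hz i j => (hBhol i j).differentiableAt (isOpen_ball.mem_nhds hz)
  have h0 : (0 : ℂ) ∈ ball (0 : ℂ) r := mem_ball_self hr
  obtain ⟨v, hv⟩ := exists_mulVec_ne_zero hne
  have hP0 : (krylov (B 0) v).det ≠ 0 := det_krylov_ne_zero (by rw [hBsq 0 h0, zero_smul]) hv
  have hPdet : ∀ᶠ z in 𝓝 0, DifferentiableAt ℂ (fun z => (krylov (B z) v).det) z := by
    filter_upwards [isOpen_ball.mem_nhds h0] with z hz
    have := differentiableAt_krylov_apply (hBdiff z hz) v
    simp only [det_fin_two]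
    fun_prop
  obtain ⟨d, hd⟩ := Complex.exists_eventually_sq_eq_of_ne_zero hPdet hP0
  obtain ⟨ε, hε, hεd⟩ := Metric.mem_nhds_iff.mp (hd.and (isOpen_ball.mem_nhds h0))
  have hball : ∀ z ∈ ball (0 : ℂ) (min ε r), (DifferentiableAt ℂ d z ∧ d z ≠ 0 ∧
      d z ^ 2 = (krylov (B z) v).det) ∧ z ∈ ball (0 : ℂ) r :=
    fun z hz => hεd (ball_subset_ball (min_le_left _ _) hz)
  refine ⟨min ε r, lt_min hε hr, min_le_right _ _, fun z => (d z)⁻¹ • krylov (B z) v,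
    fun i j z hz => ?_, fun z hz => ?_, fun z hz hz0 => ?_⟩ <;>
    obtain ⟨⟨hdz, hd0, hdsq⟩, hzr⟩ := hball z hz
  · simp only [Matrix.smul_apply, smul_eq_mul]
    exact ((hdz.inv hd0).mul
      (differentiableAt_krylov_apply (hBdiff z hzr) v i j)).differentiableWithinAt
  · exact det_inv_smul_eq_one hdsq hd0
  · rw [hAB z hzr hz0]
    exact conj_smul_krylov (hBsq z hzr) hz0 (det_inv_smul_eq_one hdsq hd0)

/-- Normal form of a strongly parabolic Higgs field near a simple pole of `det φ`.
`φ = A(z) dz` with `z·A(z) = B(z)` holomorphic, `tr B = 0`, `det A = -1/z`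
(i.e. `det B z = -z`, the coordinate being chosen so that `-det φ = z⁻¹ dz²`),
and `B 0` nilpotent and nonzero.  Then on a smaller disk there is a holomorphic
`SL(2,ℂ)`-valued gauge transformation `g` with `g⁻¹ A g = !![0,1; 1/z, 0]`. -/
theorem stmt_0 (r : ℝ) (hr : 0 < r) (A B : ℂ → Matrix (Fin 2) (Fin 2) ℂ)
    (hAB : ∀ z ∈ ball (0 : ℂ) r, z ≠ 0 → A z = z⁻¹ • B z)
    (hBhol : ∀ i j, DifferentiableOn ℂ (fun z => B z i j) (ball (0 : ℂ) r))
    (htr : ∀ z ∈ ball (0 : ℂ) r, (B z).trace = 0)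
    (hdet : ∀ z ∈ ball (0 : ℂ) r, (B z).det = -z)
    (hnilp : B 0 * B 0 = 0) (hne : B 0 ≠ 0) :
    ∃ ε : ℝ, 0 < ε ∧ ε ≤ r ∧ ∃ g : ℂ → Matrix (Fin 2) (Fin 2) ℂ,
      (∀ i j, DifferentiableOn ℂ (fun z => g z i j) (ball (0 : ℂ) ε)) ∧
      (∀ z ∈ ball (0 : ℂ) ε, (g z).det = 1) ∧
      (∀ z ∈ ball (0 : ℂ) ε, z ≠ 0 →
        (g z)⁻¹ * A z * g z = !![0, 1; z⁻¹, 0]) :=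
  stmt_0_general r hr A B hAB hBhol htr hdet hne
end

section
/- Let φ be a 2×2 traceless matrix of meromorphic 1-forms on a disk around 0 with -det φ = σ² z⁻² dz² for some σ ∈ ℂ×, and suppose zφ is holomorphic at 0. Then there exists a holomorphic SL(2,ℂ) gauge transformation g on a neighborhood of 0 such that g⁻¹φg = (σ/z)·diag(1,-1) dz. -/
/-!
Since `tr B = 0` and `det B = -σ²`, Cayley–Hamilton gives `B² = σ²`, and `Λ = diag(σ, -σ)`
satisfies the same equation; hence for every constant matrix `C` the holomorphic matrix
`M = B C + C Λ` satisfies `B M = M Λ`. Because `±σ` are distinct, `C = 1` or `C` = the swap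
matrix makes `M(0)` invertible, so `M` is invertible near `0`. Scaling the second column of `M`
by `(det M)⁻¹` preserves `B M = M Λ` and gives determinant `1`, and then
`g⁻¹ A g = z⁻¹ g⁻¹ B g = z⁻¹ Λ`.
-/

open Metric Matrix

theorem Matrix.mul_self_eq_smul_one_of_trace_eq_zero {R : Type*} [CommRing R]
    {M : Matrix (Fin 2) (Fin 2) R} {σ : R} (htr : M.trace = 0) (hdet : M.det = -σ ^ 2) :
    M * M = σ ^ 2 • (1 : Matrix (Fin 2) (Fin 2) R) := by
  rw [trace_fin_two] at htr
  rw [det_fin_two] at hdet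
  ext i j
  fin_cases i <;> fin_cases j <;>
    simp only [mul_apply, Fin.sum_univ_two, smul_apply, smul_eq_mul, one_apply_eq, one_apply_ne,
      ne_eq, zero_ne_one, one_ne_zero, not_false_eq_true, mul_one, mul_zero, Fin.zero_eta,
      Fin.mk_one, Fin.isValue]
  · linear_combination M 0 0 * htr - hdet
  · linear_combination M 0 1 * htr
  · linear_combination M 1 0 * htr
  · linear_combination M 1 1 * htr - hdet

theorem mul_mul_add_mul_mul_eq {R : Type*} [Ring R] {a B Λ : R} (C : R) (hB : B * B = a)
    (hΛ : Λ * Λ = a) (ha : Commute a C) : B * (B * C + C * Λ) = (B * C + C * Λ) * Λ := by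
  rw [mul_add, add_mul, ← mul_assoc, hB, mul_assoc C, hΛ, ha.eq, ← mul_assoc, add_comm]

theorem Matrix.inv_mul_mul_eq_of_mul_eq {n K : Type*} [Fintype n] [DecidableEq n] [CommRing K]
    {B g Λ : Matrix n n K} (hg : IsUnit g.det) (h : B * g = g * Λ) : g⁻¹ * B * g = Λ := by
  rw [mul_assoc, h, ← mul_assoc, nonsing_inv_mul _ hg, one_mul]

theorem Matrix.det_mul_diagonal_one_inv_det {K : Type*} [Field K] {M : Matrix (Fin 2) (Fin 2) K}
    (hM : M.det ≠ 0) : (M * diagonal ![1, M.det⁻¹]).det = 1 := by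
  simp [det_mul, mul_inv_cancel₀ hM]

/-- One of `C = 1` and `C = !![0, 1; 1, 0]` works: the two determinants differ by `4σ²`. -/
theorem exists_det_mul_add_mul_diagonal_ne_zero {K : Type*} [Field K] [NeZero (2 : K)]
    {M : Matrix (Fin 2) (Fin 2) K} {σ : K} (hσ : σ ≠ 0) (hdet : M.det = -σ ^ 2) :
    ∃ C, (M * C + C * diagonal ![σ, -σ]).det ≠ 0 := by
  by_contra! h
  have h₁ : (M 0 0 + σ) * (M 1 1 + -σ) - M 0 1 * M 1 0 = 0 := by
    simpa [det_fin_two, diagonal_vec2] using h 1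
  have h₂ : M 0 1 * M 1 0 - (M 0 0 + -σ) * (M 1 1 + σ) = 0 := by
    simpa [det_fin_two, mul_apply, diagonal_vec2] using h !![0, 1; 1, 0]
  rw [det_fin_two] at hdet
  have : (2 * σ) * (2 * σ) = 0 := by linear_combination h₂ - h₁ + 2 * hdet
  exact hσ (by simpa [two_ne_zero] using this)

theorem exists_pos_le_forall_mem_ball_ne {X Y : Type*} [PseudoMetricSpace X] [TopologicalSpace Y]
    [T1Space Y] {f : X → Y} {x : X} {y : Y} {r : ℝ} (hf : ContinuousAt f x) (hfx : f x ≠ y)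
    (hr : 0 < r) : ∃ ε, 0 < ε ∧ ε ≤ r ∧ ∀ z ∈ ball x ε, f z ≠ y := by
  obtain ⟨δ, hδ, hδf⟩ := eventually_nhds_iff_ball.mp (hf.eventually_ne hfx)
  exact ⟨min δ r, lt_min hδ hr, min_le_right _ _,
    fun z hz => hδf z (ball_subset_ball (min_le_left _ _) hz)⟩

section Holomorphic

variable {𝕜 : Type*} [NontriviallyNormedField 𝕜] {s : Set 𝕜} {m n p : Type*}

theorem differentiableOn_matrix_mul_apply [Fintype n] {f : 𝕜 → Matrix m n 𝕜}
    {g : 𝕜 → Matrix n p 𝕜} (hf : ∀ i j, DifferentiableOn 𝕜 (fun z => f z i j) s)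
    (hg : ∀ i j, DifferentiableOn 𝕜 (fun z => g z i j) s) (i : m) (k : p) :
    DifferentiableOn 𝕜 (fun z => (f z * g z) i k) s := by
  simp only [mul_apply]
  exact DifferentiableOn.fun_sum fun j _ => (hf i j).mul (hg j k)

theorem differentiableOn_matrix_det [Fintype n] [DecidableEq n] {f : 𝕜 → Matrix n n 𝕜}
    (hf : ∀ i j, DifferentiableOn 𝕜 (fun z => f z i j) s) :
    DifferentiableOn 𝕜 (fun z => (f z).det) s := by
  simp only [det_apply]
  exact DifferentiableOn.fun_sum fun σ _ =>
    (DifferentiableOn.fun_finsetProd fun i _ => hf (σ i) i).const_smul _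

end Holomorphic

/-- Normal form of a weakly parabolic Higgs field near a double pole of `det φ`.
`φ = A(z) dz` with `z·A(z) = B(z)` holomorphic, `tr B = 0`, and
`-det φ = σ² z⁻² dz²`, i.e. `det B z = -σ²` for `σ ∈ ℂ×`.  Then on a smaller
disk there is a holomorphic `SL(2,ℂ)`-valued gauge transformation `g` with
`g⁻¹ A g = (σ/z)·diag(1,-1)`. -/
theorem stmt_1 (r : ℝ) (hr : 0 < r) (σ : ℂ) (hσ : σ ≠ 0)
    (A B : ℂ → Matrix (Fin 2) (Fin 2) ℂ)
    (hAB : ∀ z ∈ ball (0 : ℂ) r, z ≠ 0 → A z = z⁻¹ • B z)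
    (hBhol : ∀ i j, DifferentiableOn ℂ (fun z => B z i j) (ball (0 : ℂ) r))
    (htr : ∀ z ∈ ball (0 : ℂ) r, (B z).trace = 0)
    (hdet : ∀ z ∈ ball (0 : ℂ) r, (B z).det = -σ ^ 2) :
    ∃ ε : ℝ, 0 < ε ∧ ε ≤ r ∧ ∃ g : ℂ → Matrix (Fin 2) (Fin 2) ℂ,
      (∀ i j, DifferentiableOn ℂ (fun z => g z i j) (ball (0 : ℂ) ε)) ∧
      (∀ z ∈ ball (0 : ℂ) ε, (g z).det = 1) ∧
      (∀ z ∈ ball (0 : ℂ) ε, z ≠ 0 →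
        (g z)⁻¹ * A z * g z = !![σ / z, 0; 0, -(σ / z)]) := by
  set Λ : Matrix (Fin 2) (Fin 2) ℂ := diagonal ![σ, -σ]
  have h0 : (0 : ℂ) ∈ ball (0 : ℂ) r := mem_ball_self hr
  obtain ⟨C, hC⟩ := exists_det_mul_add_mul_diagonal_ne_zero hσ (hdet 0 h0)
  set M : ℂ → Matrix (Fin 2) (Fin 2) ℂ := fun z => B z * C + C * Λ
  have hM : ∀ i j, DifferentiableOn ℂ (fun z => M z i j) (ball 0 r) := fun i j =>
    (differentiableOn_matrix_mul_apply hBhol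
      (fun _ _ => differentiableOn_const (C _ _)) i j).add_const _
  have hMΛ : ∀ z ∈ ball (0 : ℂ) r, B z * M z = M z * Λ := fun z hz =>
    mul_mul_add_mul_mul_eq C (mul_self_eq_smul_one_of_trace_eq_zero (htr z hz) (hdet z hz))
      (mul_self_eq_smul_one_of_trace_eq_zero (by simp [Λ]) (by simp [Λ, sq]))
      ((Commute.one_left C).smul_left _)
  obtain ⟨ε, hε, hεr, hMdet⟩ := exists_pos_le_forall_mem_ball_ne
    ((differentiableOn_matrix_det hM).differentiableAt (isOpen_ball.mem_nhds h0)).continuousAt hC hr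
  have hεr' : ball (0 : ℂ) ε ⊆ ball 0 r := ball_subset_ball hεr
  set D : ℂ → Matrix (Fin 2) (Fin 2) ℂ := fun z => diagonal ![1, (M z).det⁻¹]
  refine ⟨ε, hε, hεr, fun z => M z * D z, ?_,
    fun z hz => det_mul_diagonal_one_inv_det (hMdet z hz), fun z hz hz0 => ?_⟩
  · refine differentiableOn_matrix_mul_apply (fun i j => (hM i j).mono hεr') fun i j => ?_
    fin_cases i <;> fin_cases j <;>
      simp only [D, Fin.zero_eta, Fin.mk_one, diagonal_apply_eq, diagonal_apply_ne, ne_eq,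
        zero_ne_one, one_ne_zero, not_false_eq_true, cons_val_zero, cons_val_one, cons_val_fin_one,
        differentiableOn_const]
    exact ((differentiableOn_matrix_det hM).mono hεr').inv hMdet
  · have hg1 : (M z * D z).det = 1 := det_mul_diagonal_one_inv_det (hMdet z hz)
    have hMD : B z * (M z * D z) = M z * D z * Λ := by
      rw [← mul_assoc, hMΛ z (hεr' hz), mul_assoc, (commute_diagonal _ _).eq, mul_assoc]
    beta_reduce
    rw [hAB z (hεr' hz) hz0, Matrix.mul_smul, Matrix.smul_mul,
      inv_mul_mul_eq_of_mul_eq (hg1 ▸ isUnit_one) hMD]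
    simp [Λ, diagonal_vec2, div_eq_inv_mul]
end

section
/- Let Φ = [[0, r^{1/2}e^{ℓ}], [z r^{-1/2}e^{-ℓ}, 0]] dz with z = re^{iθ} and ℓ = ℓ(r) real. Then the Hermitian operator γ ↦ -i⋆([Φ* ∧ [Φ,γ]] - [Φ ∧ [Φ*,γ]]) acting on traceless Hermitian 2×2 matrices γ = [[u₀, u₁],[ū₁, -u₀]] has eigenvalues λ₀ = 16r cosh(2ℓ) (on diagonal γ), λ₁ = 8r(cosh(2ℓ) - 1), λ₂ = 8r(cosh(2ℓ) + 1) (on off-diagonal γ). In particular the operator is positive semidefinite, and positive definite whenever ℓ(r) ≠ 0 or r > 0 with cosh(2ℓ) > 1. -/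
open Matrix

/-- The operator `γ ↦ -i⋆([Φ*∧[Φ,γ]] - [Φ∧[Φ*,γ]])` for `Φ = P dz`,
expressed on matrices as `γ ↦ 2([P†,[P,γ]] + [P,[P†,γ]])`. -/
noncomputable def higgsOp (P γ : Matrix (Fin 2) (Fin 2) ℂ) :
    Matrix (Fin 2) (Fin 2) ℂ :=
  (2 : ℂ) • ((Pᴴ * (P * γ - γ * P) - (P * γ - γ * P) * Pᴴ)
    + (P * (Pᴴ * γ - γ * Pᴴ) - (Pᴴ * γ - γ * Pᴴ) * P))

/-- Traceless Hermitian matrix `[[u₀,u₁],[ū₁,-u₀]]`. -/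
noncomputable def hermMat (u₀ : ℝ) (u₁ : ℂ) : Matrix (Fin 2) (Fin 2) ℂ :=
  !![(u₀ : ℂ), u₁; (starRingEnd ℂ) u₁, -(u₀ : ℂ)]

/-!
For an off-diagonal field `P = !![0, a; b, 0]` the operator preserves traceless Hermitian
matrices, acting by `u₀ ↦ 8(|a|² + |b|²) u₀` and `u₁ ↦ 4(|a|² + |b|²) u₁ - 8 a b̄ ū₁`. The
real-linear map `u₁ ↦ a b̄ ū₁` has eigenvalues `±|a||b|`, on `e^{-iθ/2} ℝ` and `i e^{-iθ/2} ℝ`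
when `a b̄ = |a b| e^{-iθ}`, so the off-diagonal eigenvalues are `4(|a| ∓ |b|)²`, and
`|Re(a b̄ ū₁²)| ≤ |a||b||u₁|²` bounds the quadratic form `tr(M γ · γ)` below by
`16(|a|² + |b|²) u₀² + 8(|a| - |b|)² |u₁|²`. For the fiducial field `|a| = √r e^ℓ` and
`|b| = √r e^{-ℓ}`, so `|a|² + |b|² = 2r cosh 2ℓ` and `|a||b| = r`.
-/

open Complex ComplexConjugate

theorem hermMat_eq_zero_iff {u₀ : ℝ} {u₁ : ℂ} : hermMat u₀ u₁ = 0 ↔ u₀ = 0 ∧ u₁ = 0 := by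
  refine ⟨fun h => ⟨?_, ?_⟩, ?_⟩
  · simpa [hermMat] using congrFun (congrFun h 0) 0
  · simpa [hermMat] using congrFun (congrFun h 0) 1
  · rintro ⟨rfl, rfl⟩
    ext i j; fin_cases i <;> fin_cases j <;> simp [hermMat]

theorem ofReal_smul_hermMat (s u₀ : ℝ) (u₁ : ℂ) :
    (s : ℂ) • hermMat u₀ u₁ = hermMat (s * u₀) (s * u₁) := by
  ext i j; fin_cases i <;> fin_cases j <;> simp [hermMat]

theorem trace_hermMat_mul_hermMat (p u₀ : ℝ) (q u₁ : ℂ) :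
    (hermMat p q * hermMat u₀ u₁).trace = ((2 * (p * u₀) + 2 * (q * conj u₁).re : ℝ) : ℂ) := by
  rw [hermMat, hermMat, Matrix.mul_fin_two, Matrix.trace_fin_two]
  apply Complex.ext <;> simp <;> ring

section OffDiagonal

variable (a b : ℂ)

theorem conjTranspose_offDiag :
    (!![0, a; b, 0] : Matrix (Fin 2) (Fin 2) ℂ)ᴴ = !![0, conj b; conj a, 0] := by
  ext i j; fin_cases i <;> fin_cases j <;> simp

theorem higgsOp_offDiag_hermMat (u₀ : ℝ) (u₁ : ℂ) :
    higgsOp !![0, a; b, 0] (hermMat u₀ u₁)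
      = hermMat (8 * (normSq a + normSq b) * u₀)
          (4 * ((normSq a + normSq b : ℝ) : ℂ) * u₁ - 8 * a * conj b * conj u₁) := by
  rw [higgsOp, hermMat, hermMat, conjTranspose_offDiag]
  simp only [Matrix.mul_fin_two]
  ext i j
  fin_cases i <;> fin_cases j <;> simp [← Complex.mul_conj, map_ofNat] <;> ring

theorem higgsOp_offDiag_hermMat_diag (u₀ : ℝ) :
    higgsOp !![0, a; b, 0] (hermMat u₀ 0)
      = ((8 * (normSq a + normSq b) : ℝ) : ℂ) • hermMat u₀ 0 := by
  rw [higgsOp_offDiag_hermMat, ofReal_smul_hermMat]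
  simp

theorem higgsOp_offDiag_hermMat_offDiag {μ : ℝ} {w : ℂ} (hw : a * conj b * conj w = μ * w) :
    higgsOp !![0, a; b, 0] (hermMat 0 w)
      = ((4 * (normSq a + normSq b) - 8 * μ : ℝ) : ℂ) • hermMat 0 w := by
  rw [higgsOp_offDiag_hermMat, ofReal_smul_hermMat]
  congr 1
  · simp
  · push_cast
    linear_combination (-8) * hw

variable (u₀ : ℝ) (u₁ : ℂ)

theorem le_re_trace_higgsOp_offDiag_mul :
    16 * (‖a‖ ^ 2 + ‖b‖ ^ 2) * u₀ ^ 2 + 8 * (‖a‖ - ‖b‖) ^ 2 * ‖u₁‖ ^ 2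
      ≤ (higgsOp !![0, a; b, 0] (hermMat u₀ u₁) * hermMat u₀ u₁).trace.re := by
  have hq : (4 * ((normSq a + normSq b : ℝ) : ℂ) * u₁ - 8 * a * conj b * conj u₁) * conj u₁
      = ((4 * (normSq a + normSq b) * normSq u₁ : ℝ) : ℂ)
        - ((8 : ℝ) : ℂ) * (a * conj b * conj u₁ ^ 2) := by
    push_cast [← mul_conj]; ring
  have hcross : (a * conj b * conj u₁ ^ 2).re ≤ ‖a‖ * ‖b‖ * ‖u₁‖ ^ 2 :=
    (re_le_norm _).trans_eq (by simp)
  rw [higgsOp_offDiag_hermMat, trace_hermMat_mul_hermMat, ofReal_re, hq, sub_re, ofReal_re,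
    re_ofReal_mul]
  simp only [normSq_eq_norm_sq]
  nlinarith

theorem re_trace_higgsOp_offDiag_mul_nonneg :
    0 ≤ (higgsOp !![0, a; b, 0] (hermMat u₀ u₁) * hermMat u₀ u₁).trace.re :=
  le_trans (by positivity) (le_re_trace_higgsOp_offDiag_mul a b u₀ u₁)

theorem re_trace_higgsOp_offDiag_mul_pos (hab : ‖a‖ ≠ ‖b‖) (hγ : hermMat u₀ u₁ ≠ 0) :
    0 < (higgsOp !![0, a; b, 0] (hermMat u₀ u₁) * hermMat u₀ u₁).trace.re := by
  refine lt_of_lt_of_le ?_ (le_re_trace_higgsOp_offDiag_mul a b u₀ u₁)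
  have hgap : 0 < (‖a‖ - ‖b‖) ^ 2 := by positivity [sub_ne_zero.2 hab]
  have hsum : 0 < ‖a‖ ^ 2 + ‖b‖ ^ 2 := by nlinarith [sq_nonneg (‖a‖ + ‖b‖)]
  by_cases h₀ : u₀ = 0
  · have h₁ : u₁ ≠ 0 := fun h₁ => hγ (hermMat_eq_zero_iff.2 ⟨h₀, h₁⟩)
    have := norm_pos_iff.2 h₁
    positivity
  · positivity

end OffDiagonal

section Phase

variable (α β θ : ℝ)

theorem normSq_ofReal_add_normSq_mul_exp :
    normSq (α : ℂ) + normSq ((β : ℂ) * exp (θ * I)) = α ^ 2 + β ^ 2 := by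
  simp [normSq_eq_norm_sq, norm_exp_ofReal_mul_I]

theorem conj_exp_mul_conj_exp_halfAngle :
    conj (exp (θ * I)) * conj (exp (-((θ : ℂ) / 2) * I)) = exp (-((θ : ℂ) / 2) * I) := by
  rw [← map_mul, ← exp_add, ← exp_conj]
  congr 1
  simp only [map_add, map_mul, map_neg, map_div₀, conj_ofReal, conj_I, map_ofNat]
  ring

theorem higgsOp_offDiag_exp_hermMat_halfAngle :
    higgsOp !![0, (α : ℂ); (β : ℂ) * exp (θ * I), 0] (hermMat 0 (exp (-((θ : ℂ) / 2) * I)))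
      = ((4 * (α - β) ^ 2 : ℝ) : ℂ) • hermMat 0 (exp (-((θ : ℂ) / 2) * I)) := by
  have hw : (α : ℂ) * conj ((β : ℂ) * exp (θ * I)) * conj (exp (-((θ : ℂ) / 2) * I))
      = ((α * β : ℝ) : ℂ) * exp (-((θ : ℂ) / 2) * I) := by
    rw [map_mul, conj_ofReal, mul_assoc, mul_assoc, conj_exp_mul_conj_exp_halfAngle]
    push_cast; ring
  rw [higgsOp_offDiag_hermMat_offDiag _ _ hw, normSq_ofReal_add_normSq_mul_exp]
  congr 2; ring

theorem higgsOp_offDiag_exp_hermMat_I_halfAngle :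
    higgsOp !![0, (α : ℂ); (β : ℂ) * exp (θ * I), 0] (hermMat 0 (I * exp (-((θ : ℂ) / 2) * I)))
      = ((4 * (α + β) ^ 2 : ℝ) : ℂ) • hermMat 0 (I * exp (-((θ : ℂ) / 2) * I)) := by
  have hw : (α : ℂ) * conj ((β : ℂ) * exp (θ * I)) * conj (I * exp (-((θ : ℂ) / 2) * I))
      = ((-(α * β) : ℝ) : ℂ) * (I * exp (-((θ : ℂ) / 2) * I)) := by
    simp only [map_mul, conj_ofReal, conj_I, ofReal_neg, ofReal_mul]
    linear_combination (-(α : ℂ) * β * I) * conj_exp_mul_conj_exp_halfAngle θ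
  rw [higgsOp_offDiag_hermMat_offDiag _ _ hw, normSq_ofReal_add_normSq_mul_exp]
  congr 2; ring

end Phase

/-- For the fiducial Higgs field `Φ = [[0, r^{1/2}e^ℓ],[z r^{-1/2}e^{-ℓ},0]] dz`,
`z = re^{iθ}`, the Hermitian operator `-i⋆M_Φ` has eigenvalue
`λ₀ = 16r cosh(2ℓ)` on diagonal matrices, and eigenvalues
`λ₁ = 8r(cosh(2ℓ)-1)`, `λ₂ = 8r(cosh(2ℓ)+1)` on off-diagonal matrices;
it is positive semidefinite, and positive definite when `cosh(2ℓ) > 1`. -/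
theorem stmt_10 (r θ ℓ : ℝ) (hr : 0 < r) :
    let z : ℂ := (r : ℂ) * Complex.exp ((θ : ℂ) * Complex.I)
    let P : Matrix (Fin 2) (Fin 2) ℂ :=
      !![0, ((Real.sqrt r : ℝ) : ℂ) * ((Real.exp ℓ : ℝ) : ℂ);
         z / ((Real.sqrt r : ℝ) : ℂ) * ((Real.exp (-ℓ) : ℝ) : ℂ), 0]
    (∀ u₀ : ℝ, higgsOp P (hermMat u₀ 0)
        = ((16 * r * Real.cosh (2 * ℓ) : ℝ) : ℂ) • hermMat u₀ 0)
    ∧ (higgsOp P (hermMat 0 (Complex.exp (-((θ : ℂ) / 2) * Complex.I)))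
        = ((8 * r * (Real.cosh (2 * ℓ) - 1) : ℝ) : ℂ) •
            hermMat 0 (Complex.exp (-((θ : ℂ) / 2) * Complex.I)))
    ∧ (higgsOp P (hermMat 0 (Complex.I * Complex.exp (-((θ : ℂ) / 2) * Complex.I)))
        = ((8 * r * (Real.cosh (2 * ℓ) + 1) : ℝ) : ℂ) •
            hermMat 0 (Complex.I * Complex.exp (-((θ : ℂ) / 2) * Complex.I)))
    ∧ (∀ (u₀ : ℝ) (u₁ : ℂ),
        0 ≤ ((higgsOp P (hermMat u₀ u₁) * hermMat u₀ u₁).trace).re)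
    ∧ (1 < Real.cosh (2 * ℓ) → ∀ (u₀ : ℝ) (u₁ : ℂ), hermMat u₀ u₁ ≠ 0 →
        0 < ((higgsOp P (hermMat u₀ u₁) * hermMat u₀ u₁).trace).re) := by
  intro z P
  set α := √r * Real.exp ℓ
  set β := √r * Real.exp (-ℓ)
  have hsqrt : (√r : ℂ) ≠ 0 := ofReal_ne_zero.2 (Real.sqrt_pos.2 hr).ne'
  have hz : z / √r = √r * exp (θ * I) := by
    rw [div_eq_iff hsqrt, mul_right_comm, ← ofReal_mul, Real.mul_self_sqrt hr.le]
  have hP : P = !![0, (α : ℂ); (β : ℂ) * exp (θ * I), 0] := by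
    ext i j
    fin_cases i <;> fin_cases j <;> simp [P, hz, α, β]
    ring
  have hαβ : α * β = r := by
    rw [mul_mul_mul_comm, Real.mul_self_sqrt hr.le, ← Real.exp_add, add_neg_cancel,
      Real.exp_zero, mul_one]
  have hsq : α ^ 2 + β ^ 2 = 2 * r * Real.cosh (2 * ℓ) := by
    rw [Real.cosh_eq, mul_pow, mul_pow, Real.sq_sqrt hr.le, ← Real.exp_nat_mul, ← Real.exp_nat_mul]
    push_cast; ring_nf
  rw [hP]
  refine ⟨fun u₀ => ?_, ?_, ?_, re_trace_higgsOp_offDiag_mul_nonneg _ _,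
    fun hcosh u₀ u₁ hγ => re_trace_higgsOp_offDiag_mul_pos _ _ u₀ u₁ ?_ hγ⟩
  · rw [higgsOp_offDiag_hermMat_diag, normSq_ofReal_add_normSq_mul_exp, hsq]
    congr 2; ring
  · rw [higgsOp_offDiag_exp_hermMat_halfAngle]
    congr 2; linear_combination 4 * hsq - 8 * hαβ
  · rw [higgsOp_offDiag_exp_hermMat_I_halfAngle]
    congr 2; linear_combination 4 * hsq + 8 * hαβ
  · have hαβ_ne : α ≠ β := fun h => by
      rw [h] at hsq hαβ
      nlinarith
    rwa [norm_mul, norm_exp_ofReal_mul_I, mul_one, norm_real, norm_real,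
      Real.norm_of_nonneg (by positivity), Real.norm_of_nonneg (by positivity)]
end
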